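/- arXiv:0903.4527 — 2 statements merged into one kernel-verified Lean document; each statement's English description precedes it below -/
import Mathlib

section
/- Let G = (V,E) be a finite connected simple graph. Then for every real ξ > 0, θ_G(1,ξ) = (1 + ξ^{−2})^{|E|} ( ξ/(ξ + ξ⁻¹) )^{|V|} + (1 + ξ^{2})^{|E|} ( ξ⁻¹/(ξ + ξ⁻¹) )^{|V|}. -/
/-!
`f_n(ξ - ξ⁻¹)` is a fixed combination of the `n`-th powers of the two roots `ξ` and `-ξ⁻¹` of
`t² = (ξ - ξ⁻¹) t + 1`. Expanding the product over vertices turns `θ_G(1, ξ)` into a sum over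
spin configurations `σ : V → {ξ, -ξ⁻¹}`, and for fixed `σ` the sum over edge subsets factorises
as `∏_e (σ(u) σ(v) + 1)`. Since `ξ · (-ξ⁻¹) = -1`, an edge joining opposite spins kills its
configuration, so on a connected graph only the two constant configurations survive.
-/

/-- The polynomials `f_n` defined by `f_0 = 1`, `f_1 = 0`,
`f_{n+1}(x) = x f_n(x) + f_{n-1}(x)`. -/
def chebF : ℕ → ℝ → ℝ
  | 0, _ => 1
  | 1, _ => 0
  | n + 2, x => x * chebF (n + 1) x + chebF n x

/-- `deg ep1 ep2 i s` is the number of edges in `s` incident to the node `i`. -/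
def deg {V E : Type} [DecidableEq V] [DecidableEq E] (ep1 ep2 : E → V) (i : V)
    (s : Finset E) : ℕ :=
  (s.filter fun e => ep1 e = i ∨ ep2 e = i).card

/-- The graph polynomial `θ_G(β,ξ) = Σ_{s ⊆ E} β^{|s|} Π_{i∈V} f_{d_i(s)}(ξ - ξ⁻¹)`. -/
noncomputable def theta {V E : Type} [Fintype V] [DecidableEq V] [Fintype E] [DecidableEq E]
    (ep1 ep2 : E → V) (β ξ : ℝ) : ℝ :=
  ∑ s : Finset E, β ^ s.card * ∏ i : V, chebF (deg ep1 ep2 i s) (ξ - ξ⁻¹)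

/-- The two roots `ξ` and `-ξ⁻¹` of `t ^ 2 = (ξ - ξ⁻¹) t + 1`. -/
noncomputable def spin (ξ : ℝ) (b : Bool) : ℝ := if b then ξ else -ξ⁻¹

/-- Chosen so that `∑ b, spinWeight ξ b * spin ξ b ^ n` matches `f_0 = 1` and `f_1 = 0`. -/
noncomputable def spinWeight (ξ : ℝ) (b : Bool) : ℝ :=
  if b then ξ⁻¹ / (ξ + ξ⁻¹) else ξ / (ξ + ξ⁻¹)

lemma spin_sq {ξ : ℝ} (hξ : ξ ≠ 0) (b : Bool) :
    spin ξ b ^ 2 = (ξ - ξ⁻¹) * spin ξ b + 1 := by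
  cases b <;> simp only [spin, Bool.false_eq_true, if_false, if_true] <;> field_simp <;> ring

lemma spin_mul_spin_add_one_of_ne {ξ : ℝ} (hξ : ξ ≠ 0) {b b' : Bool} (h : b ≠ b') :
    spin ξ b * spin ξ b' + 1 = 0 := by
  cases b <;> cases b' <;> simp_all [spin]

lemma add_inv_ne_zero {ξ : ℝ} (hξ : ξ ≠ 0) : ξ + ξ⁻¹ ≠ 0 := by
  rw [show ξ + ξ⁻¹ = (ξ ^ 2 + 1) / ξ by field_simp]
  exact div_ne_zero (by positivity) hξ

lemma chebF_eq_sum_spin {ξ : ℝ} (hξ : ξ ≠ 0) :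
    ∀ n, chebF n (ξ - ξ⁻¹) = ∑ b, spinWeight ξ b * spin ξ b ^ n
  | 0 => by
    have := add_inv_ne_zero hξ
    simp only [chebF, Fintype.sum_bool, spinWeight, pow_zero, mul_one, Bool.false_eq_true,
      ↓reduceIte]
    field_simp
    ring
  | 1 => by
    have := add_inv_ne_zero hξ
    simp only [chebF, Fintype.sum_bool, spinWeight, spin, pow_one, Bool.false_eq_true,
      ↓reduceIte]
    field_simp
    ring
  | n + 2 => by
    have hstep (b : Bool) :
        spin ξ b ^ (n + 2) = (ξ - ξ⁻¹) * spin ξ b ^ (n + 1) + spin ξ b ^ n := by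
      rw [pow_add, spin_sq hξ]
      ring
    simp only [chebF, chebF_eq_sum_spin hξ (n + 1), chebF_eq_sum_spin hξ n, Fintype.sum_bool,
      hstep]
    ring

lemma exists_edge_ne_of_connected {V E : Type} {α : Type*} {ep1 ep2 : E → V}
    (hconn : (SimpleGraph.fromRel fun a b => ∃ e, ep1 e = a ∧ ep2 e = b).Connected)
    (f : V → α) {a b : V} (hab : f a ≠ f b) : ∃ e, f (ep1 e) ≠ f (ep2 e) := by
  obtain ⟨p⟩ := hconn.preconnected a b
  obtain ⟨d, -, hd₁, hd₂⟩ := p.exists_boundary_dart {v | f v = f a} rfl (Ne.symm hab)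
  have hne : f d.fst ≠ f d.snd := fun h => hd₂ (h.symm.trans hd₁)
  rcases (SimpleGraph.fromRel_adj _ _ _).1 d.adj |>.2 with ⟨e, he₁, he₂⟩ | ⟨e, he₁, he₂⟩
  · exact ⟨e, he₁ ▸ he₂ ▸ hne⟩
  · exact ⟨e, he₁ ▸ he₂ ▸ hne.symm⟩

section Graph

variable {V E : Type} [Fintype V] [DecidableEq V] [DecidableEq E] {ep1 ep2 : E → V}

lemma prod_pow_ite_endpoints {M : Type*} [CommMonoid M] {u v : V} (huv : u ≠ v) (a : V → M) :
    ∏ i, a i ^ (if u = i ∨ v = i then 1 else 0) = a u * a v := by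
  rw [Fintype.prod_eq_mul u v huv fun i hi => by simp [Ne.symm hi.1, Ne.symm hi.2]]
  simp [Ne.symm huv, huv]

lemma prod_pow_deg {M : Type*} [CommMonoid M] (hloop : ∀ e, ep1 e ≠ ep2 e) (a : V → M)
    (s : Finset E) : ∏ i, a i ^ deg ep1 ep2 i s = ∏ e ∈ s, a (ep1 e) * a (ep2 e) := by
  simp only [deg, Finset.card_filter, ← Finset.prod_pow_eq_pow_sum]
  rw [Finset.prod_comm]
  exact Finset.prod_congr rfl fun e _ => prod_pow_ite_endpoints (hloop e) a

lemma sum_prod_pow_deg {R : Type*} [CommSemiring R] [Fintype E] (hloop : ∀ e, ep1 e ≠ ep2 e)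
    (a : V → R) :
    ∑ s : Finset E, ∏ i, a i ^ deg ep1 ep2 i s = ∏ e, (a (ep1 e) * a (ep2 e) + 1) := by
  simp only [prod_pow_deg hloop, Finset.prod_add_one, Finset.powerset_univ]

lemma theta_one_eq_sum_spin [Fintype E] (hloop : ∀ e, ep1 e ≠ ep2 e) {ξ : ℝ} (hξ : ξ ≠ 0) :
    theta ep1 ep2 1 ξ = ∑ σ : V → Bool,
      (∏ i, spinWeight ξ (σ i)) * ∏ e, (spin ξ (σ (ep1 e)) * spin ξ (σ (ep2 e)) + 1) := by
  simp only [theta, one_pow, one_mul, chebF_eq_sum_spin hξ, Finset.prod_univ_sum,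
    Fintype.piFinset_univ, Finset.prod_mul_distrib]
  rw [Finset.sum_comm]
  simp only [← Finset.mul_sum, sum_prod_pow_deg hloop]

end Graph

theorem stmt_9_general {V E : Type} [Fintype V] [DecidableEq V] [Fintype E] [DecidableEq E]
    -- a finite connected simple graph
    (ep1 ep2 : E → V)
    (hloop : ∀ e, ep1 e ≠ ep2 e)
    (hconn : (SimpleGraph.fromRel fun a b => ∃ e, ep1 e = a ∧ ep2 e = b).Connected)
    (ξ : ℝ) (hξ : 0 < ξ) :
    theta ep1 ep2 1 ξ =
      (1 + ξ ^ (-2 : ℤ)) ^ Fintype.card E * (ξ / (ξ + ξ⁻¹)) ^ Fintype.card V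
      + (1 + ξ ^ (2 : ℤ)) ^ Fintype.card E * (ξ⁻¹ / (ξ + ξ⁻¹)) ^ Fintype.card V := by
  obtain ⟨v⟩ := hconn.nonempty
  have hconst : (fun _ : V => false) ≠ fun _ => true := fun h => by simpa using congrFun h v
  have hmixed (σ : V → Bool) (hσ : σ ≠ (fun _ => false) ∧ σ ≠ fun _ => true) :
      ∏ e, (spin ξ (σ (ep1 e)) * spin ξ (σ (ep2 e)) + 1) = 0 := by
    obtain ⟨a, ha⟩ := Function.ne_iff.1 hσ.1
    obtain ⟨b, hb⟩ := Function.ne_iff.1 hσ.2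
    obtain ⟨e, he⟩ := exists_edge_ne_of_connected hconn σ (a := a) (b := b) (by simp_all)
    exact Finset.prod_eq_zero (Finset.mem_univ e) (spin_mul_spin_add_one_of_ne hξ.ne' he)
  rw [theta_one_eq_sum_spin hloop hξ.ne', Fintype.sum_eq_add _ _ hconst
    fun σ hσ => by rw [hmixed σ hσ, mul_zero]]
  simp only [Finset.prod_const, Finset.card_univ, spin, spinWeight, Bool.false_eq_true,
    ↓reduceIte, zpow_neg, zpow_two]
  ring

theorem stmt_9 {V E : Type} [Fintype V] [DecidableEq V] [Fintype E] [DecidableEq E]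
    -- a finite connected simple graph
    (ep1 ep2 : E → V)
    (hloop : ∀ e, ep1 e ≠ ep2 e)
    (hsimple : ∀ e e',
      (ep1 e = ep1 e' ∧ ep2 e = ep2 e') ∨ (ep1 e = ep2 e' ∧ ep2 e = ep1 e') → e = e')
    (hconn : (SimpleGraph.fromRel fun a b => ∃ e, ep1 e = a ∧ ep2 e = b).Connected)
    (ξ : ℝ) (hξ : 0 < ξ) :
    theta ep1 ep2 1 ξ =
      (1 + ξ ^ (-2 : ℤ)) ^ Fintype.card E * (ξ / (ξ + ξ⁻¹)) ^ Fintype.card V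
      + (1 + ξ ^ (2 : ℤ)) ^ Fintype.card E * (ξ⁻¹ / (ξ + ξ⁻¹)) ^ Fintype.card V :=
  stmt_9_general ep1 ep2 hloop hconn ξ hξ
end

section
/- Let G be a finite connected multigraph without loop edges and with |E| ≥ |V|, and let p be the integer polynomial with θ_G(β, √−1) = (1 − β)^{|E|−|V|} p(β) for all complex β. Then p(1) equals the number of injective maps ψ : V → E such that for every i ∈ V the edge ψ(i) is incident to i; that is, ω_G(1) = #{ ψ : V → E : ψ injective and ψ(i) incident to i for all i }. -/
/-- The polynomials `f_n` over ℂ defined by `f_0 = 1`, `f_1 = 0`,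
`f_{n+1}(x) = x f_n(x) + f_{n-1}(x)`. -/
def chebFC : ℕ → ℂ → ℂ
  | 0, _ => 1
  | 1, _ => 0
  | n + 2, x => x * chebFC (n + 1) x + chebFC n x

/-- `degM ep1 ep2 i s` is the degree of the node `i` in the multigraph edge
subset `s`; a loop at `i` counts twice. -/
def degM {V E : Type} [DecidableEq V] [DecidableEq E] (ep1 ep2 : E → V) (i : V)
    (s : Finset E) : ℕ :=
  (s.filter fun e => ep1 e = i).card + (s.filter fun e => ep2 e = i).card

/-- The multigraph polynomial `θ_G(β, ξ)` evaluated at `ξ = √-1`: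
`θ_G(β, √-1) = Σ_{s ⊆ E} β^{|s|} Π_{i∈V} f_{d_i(s)}(√-1 - (√-1)⁻¹)`. -/
noncomputable def thetaMI {V E : Type} [Fintype V] [DecidableEq V] [Fintype E] [DecidableEq E]
    (ep1 ep2 : E → V) (β : ℂ) : ℂ :=
  ∑ s : Finset E, β ^ s.card *
    ∏ i : V, chebFC (degM ep1 ep2 i s) (Complex.I - Complex.I⁻¹)

/-!
At `x = 2√-1` the recursion gives `f_n(x) = (1 - n) (√-1)ⁿ`, so by the handshake lemma
`θ_G(β, √-1) = Σ_s (-β)^{|s|} ∏_i (1 - d_i(s))`. For a loopless graph, `1 - d_i(s)` is the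
signed count of the ways to pick at `i` either nothing (sign `+1`) or an edge of `s` at `i`
(sign `-1`), so the product expands into a signed sum over partial incident choices
`φ : V → Option E`. Summing over the supersets `s` of the set `T` of chosen edges gives
`(-β)^{|T|} (1 - β)^{|E| - |T|}`, and `|T| ≤ |V|` exhibits `θ_G` as `(1 - β)^{|E| - |V|}`
times an explicit polynomial `ω_G`. At `β = 1` only the choices with `|T| = |V|` survive:
these are the total injective ones, each of weight `1`.
-/

open Finset Complex

lemma chebFC_two_mul_I (n : ℕ) : chebFC n (2 * I) = (1 - n) * I ^ n := by
  induction n using Nat.twoStepInduction with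
  | zero => simp [chebFC]
  | one => simp [chebFC]
  | more n ih₀ ih₁ =>
    rw [chebFC, ih₁, ih₀]
    push_cast
    linear_combination ((1 - n) * I ^ n) * I_sq

lemma sum_pow_card_of_subset {E R : Type} [Fintype E] [DecidableEq E] [CommSemiring R]
    (T : Finset E) (x : R) :
    ∑ s, (if T ⊆ s then x ^ #s else 0) = x ^ #T * (x + 1) ^ (Fintype.card E - #T) := by
  have h := prod_add (fun _ => x) (fun e => if e ∉ T then 1 else 0) univ
  simp only [powerset_univ, prod_const, prod_boole] at h
  trans ∏ e, (x + if e ∉ T then 1 else 0)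
  · rw [h]
    refine sum_congr rfl fun s _ => ?_
    simp only [mul_ite, mul_one, mul_zero, mem_sdiff, mem_univ, true_and, not_imp_not, subset_iff]
  · simp only [add_ite, add_zero, prod_ite, prod_const, not_not, filter_mem_eq_inter, univ_inter,
      filter_not, card_univ_sdiff]
    ring

section Degree

variable {V E : Type} [DecidableEq V] [DecidableEq E] (ep1 ep2 : E → V)

lemma degM_eq_card_filter (hloopfree : ∀ e, ep1 e ≠ ep2 e) (i : V) (s : Finset E) :
    degM ep1 ep2 i s = #{e ∈ s | ep1 e = i ∨ ep2 e = i} := by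
  rw [filter_or, card_union_of_disjoint
    (disjoint_filter.2 fun e _ h₁ h₂ => hloopfree e (h₁.trans h₂.symm))]
  rfl

lemma sum_degM [Fintype V] (s : Finset E) : ∑ i, degM ep1 ep2 i s = 2 * #s := by
  simp only [degM, sum_add_distrib, two_mul]
  congr 1 <;> exact (card_eq_sum_card_fiberwise (by simp)).symm

lemma prod_chebFC_degM [Fintype V] (s : Finset E) :
    ∏ i, chebFC (degM ep1 ep2 i s) (I - I⁻¹) =
      (-1) ^ #s * ∏ i, (1 - (degM ep1 ep2 i s : ℂ)) := by
  rw [inv_I, sub_neg_eq_add, ← two_mul]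
  simp only [chebFC_two_mul_I, prod_mul_distrib, prod_pow_eq_pow_sum, sum_degM, pow_mul, I_sq]
  ring

def choiceWeight (s : Finset E) (i : V) (o : Option E) : ℂ :=
  if ∀ e ∈ o, e ∈ s ∧ (ep1 e = i ∨ ep2 e = i) then o.elim 1 fun _ => -1 else 0

lemma sum_choiceWeight [Fintype E] (hloopfree : ∀ e, ep1 e ≠ ep2 e) (s : Finset E) (i : V) :
    ∑ o, choiceWeight ep1 ep2 s i o = 1 - degM ep1 ep2 i s := by
  rw [degM_eq_card_filter ep1 ep2 hloopfree, Fintype.sum_option]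
  simp [choiceWeight, ← sum_filter, sub_eq_add_neg, filter_and, inter_filter]

end Degree

section Choice

variable {V E : Type} (ep1 ep2 : E → V)

def IsIncidentChoice (φ : V → Option E) : Prop := ∀ i, ∀ e ∈ φ i, ep1 e = i ∨ ep2 e = i

instance [Fintype V] [DecidableEq V] (φ : V → Option E) :
    Decidable (IsIncidentChoice ep1 ep2 φ) :=
  inferInstanceAs (Decidable (∀ i, ∀ e ∈ φ i, _))

lemma isIncidentChoice_comp_some_iff (ψ : V → E) :
    IsIncidentChoice ep1 ep2 (some ∘ ψ) ↔ ∀ i, ep1 (ψ i) = i ∨ ep2 (ψ i) = i := by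
  simp [IsIncidentChoice]

variable [Fintype V]

def choiceSign (φ : V → Option E) : ℂ := ∏ i, (φ i).elim 1 fun _ => -1

lemma choiceSign_comp_some (ψ : V → E) : choiceSign (some ∘ ψ) = (-1) ^ Fintype.card V := by
  simp [choiceSign]

variable [DecidableEq E]

def chosenEdges (φ : V → Option E) : Finset E := (univ.image φ).eraseNone

lemma card_chosenEdges_le (φ : V → Option E) : #(chosenEdges φ) ≤ Fintype.card V :=
  (card_eraseNone_le _).trans card_image_le

lemma card_chosenEdges_lt_of_eq_none {φ : V → Option E} {i : V} (hi : φ i = none) :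
    #(chosenEdges φ) < Fintype.card V := by
  have hnone : none ∈ univ.image φ := mem_image.2 ⟨i, mem_univ i, hi⟩
  have hpos : 0 < Fintype.card V := Fintype.card_pos_iff.2 ⟨i⟩
  have himage : #(univ.image φ) ≤ Fintype.card V := card_image_le
  rw [chosenEdges, card_eraseNone_of_mem hnone]
  omega

lemma chosenEdges_comp_some (ψ : V → E) : chosenEdges (some ∘ ψ) = univ.image ψ := by
  rw [chosenEdges, ← image_image, eraseNone_image_some]

variable [DecidableEq V]

lemma prod_choiceWeight (s : Finset E) (φ : V → Option E) :
    ∏ i, choiceWeight ep1 ep2 s i (φ i) =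
      if IsIncidentChoice ep1 ep2 φ ∧ chosenEdges φ ⊆ s then choiceSign φ else 0 := by
  simp only [choiceWeight, Fintype.prod_ite_zero]
  congr 1
  simp only [IsIncidentChoice, chosenEdges, subset_iff, mem_eraseNone, mem_image, mem_univ,
    true_and, Option.mem_def, forall_exists_index]
  exact propext ⟨fun h => ⟨fun i e he => (h i e he).2, fun e i he => (h i e he).1⟩,
    fun h i e he => ⟨h.2 i he, h.1 i e he⟩⟩

variable [Fintype E]

/-- The polynomial `ω_G(β)` of the paper: it equals `θ_G(β, √-1) / (1 - β)^{|E| - |V|}` for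
`β ≠ 1` (see `thetaMI_eq_mul_omegaMI`) and is its continuous extension to `β = 1`. -/
def omegaMI (β : ℂ) : ℂ :=
  ∑ φ with IsIncidentChoice ep1 ep2 φ,
    choiceSign φ * (-β) ^ #(chosenEdges φ) * (1 - β) ^ (Fintype.card V - #(chosenEdges φ))

lemma continuous_omegaMI : Continuous (omegaMI ep1 ep2) := by
  unfold omegaMI
  fun_prop

lemma prod_one_sub_degM (hloopfree : ∀ e, ep1 e ≠ ep2 e) (s : Finset E) :
    ∏ i, (1 - (degM ep1 ep2 i s : ℂ)) = ∑ φ,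
      if IsIncidentChoice ep1 ep2 φ ∧ chosenEdges φ ⊆ s then choiceSign φ else 0 := by
  simp only [← sum_choiceWeight ep1 ep2 hloopfree, prod_univ_sum, Fintype.piFinset_univ,
    prod_choiceWeight]

theorem thetaMI_eq_mul_omegaMI (hloopfree : ∀ e, ep1 e ≠ ep2 e)
    (hcard : Fintype.card V ≤ Fintype.card E) (β : ℂ) :
    thetaMI ep1 ep2 β = (1 - β) ^ (Fintype.card E - Fintype.card V) * omegaMI ep1 ep2 β := by
  have hsplit (φ : V → Option E) : (1 - β) ^ (Fintype.card E - #(chosenEdges φ)) =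
      (1 - β) ^ (Fintype.card E - Fintype.card V) *
        (1 - β) ^ (Fintype.card V - #(chosenEdges φ)) := by
    have := card_chosenEdges_le φ
    rw [← pow_add]
    congr 1
    omega
  calc thetaMI ep1 ep2 β
      = ∑ s, ∑ φ, if IsIncidentChoice ep1 ep2 φ ∧ chosenEdges φ ⊆ s
          then choiceSign φ * (-β) ^ #s else 0 := by
        simp only [thetaMI, prod_chebFC_degM, prod_one_sub_degM ep1 ep2 hloopfree, mul_sum]
        refine sum_congr rfl fun s _ => sum_congr rfl fun φ _ => ?_
        split_ifs <;> ring
    _ = ∑ φ with IsIncidentChoice ep1 ep2 φ,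
          choiceSign φ * ∑ s, if chosenEdges φ ⊆ s then (-β) ^ #s else 0 := by
        rw [sum_comm, sum_filter]
        refine sum_congr rfl fun φ _ => ?_
        by_cases hφ : IsIncidentChoice ep1 ep2 φ <;> simp [hφ, mul_sum]
    _ = (1 - β) ^ (Fintype.card E - Fintype.card V) * omegaMI ep1 ep2 β := by
        simp only [sum_pow_card_of_subset, neg_add_eq_sub, hsplit, omegaMI, mul_sum]
        exact sum_congr rfl fun φ _ => by ring

lemma omegaMI_one : omegaMI ep1 ep2 1 =
    Nat.card {ψ : V → E // Function.Injective ψ ∧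
      ∀ i, ep1 (ψ i) = i ∨ ep2 (ψ i) = i} := by
  set F : (V → Option E) → ℂ := fun φ => if IsIncidentChoice ep1 ep2 φ then
    choiceSign φ * (-1) ^ #(chosenEdges φ) * (1 - 1) ^ (Fintype.card V - #(chosenEdges φ)) else 0
  have hsome (ψ : V → E) : F (some ∘ ψ) =
      if Function.Injective ψ ∧ ∀ i, ep1 (ψ i) = i ∨ ep2 (ψ i) = i then 1 else 0 := by
    simp only [F, isIncidentChoice_comp_some_iff, chosenEdges_comp_some, choiceSign_comp_some]
    by_cases hψ : Function.Injective ψ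
    · simp [hψ, card_image_of_injective, ← mul_pow]
    · have : #(univ.image ψ) < Fintype.card V := lt_of_le_of_ne card_image_le
        (by rwa [← card_univ, Ne, card_image_iff, coe_univ, Set.injOn_univ])
      simp [hψ, zero_pow (Nat.sub_ne_zero_of_lt this)]
  have hnone (φ : V → Option E) (hφ : φ ∉ univ.map Function.Embedding.some.arrowCongrRight) :
      F φ = 0 := by
    obtain ⟨i, hi⟩ : ∃ i, φ i = none := by
      by_contra! h
      exact hφ (mem_map.2 ⟨fun i => (φ i).get (Option.ne_none_iff_isSome.1 (h i)), mem_univ _,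
        funext fun i => by simp⟩)
    simp [F, zero_pow (Nat.sub_ne_zero_of_lt (card_chosenEdges_lt_of_eq_none hi))]
  calc omegaMI ep1 ep2 1 = ∑ φ, F φ := sum_filter _ _
    _ = ∑ φ ∈ univ.map Function.Embedding.some.arrowCongrRight, F φ :=
      (sum_subset (subset_univ _) fun φ _ => hnone φ).symm
    _ = ∑ ψ, F (some ∘ ψ) := sum_map _ _ _
    _ = _ := by simp only [hsome, sum_boole, Nat.card_eq_fintype_card, Fintype.card_subtype]

end Choice

theorem stmt_16_general {V E : Type} [Fintype V] [DecidableEq V] [Fintype E] [DecidableEq E]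
    -- a finite connected multigraph without loop edges and with `|E| ≥ |V|`
    (ep1 ep2 : E → V)
    (hloopfree : ∀ e, ep1 e ≠ ep2 e)
    (hcard : Fintype.card V ≤ Fintype.card E)
    -- the integer polynomial `p` with `θ_G(β, √-1) = (1-β)^{|E|-|V|} p(β)`,
    -- i.e. `ω_G = p`
    (p : Polynomial ℤ)
    (hp : ∀ β : ℂ, thetaMI ep1 ep2 β =
      (1 - β) ^ (Fintype.card E - Fintype.card V) * Polynomial.aeval β p) :
    p.eval 1 =
      (Nat.card {ψ : V → E // Function.Injective ψ ∧
        ∀ i : V, ep1 (ψ i) = i ∨ ep2 (ψ i) = i} : ℤ) := by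
  have hagree : Set.EqOn (fun β => Polynomial.aeval β p) (omegaMI ep1 ep2) {1}ᶜ := fun β hβ =>
    mul_left_cancel₀ (pow_ne_zero _ (sub_ne_zero.2 (Ne.symm hβ)))
      ((hp β).symm.trans (thetaMI_eq_mul_omegaMI ep1 ep2 hloopfree hcard β))
  have hone := congrFun (Continuous.ext_on (dense_compl_singleton 1)
    (Polynomial.continuous_aeval p) (continuous_omegaMI ep1 ep2) hagree) 1
  have heval : Polynomial.aeval (1 : ℂ) p = ((p.eval 1 : ℤ) : ℂ) := by
    simpa using Polynomial.aeval_algebraMap_apply ℂ (1 : ℤ) p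
  rw [heval, omegaMI_one] at hone
  exact_mod_cast hone

theorem stmt_16 {V E : Type} [Fintype V] [DecidableEq V] [Fintype E] [DecidableEq E]
    -- a finite connected multigraph without loop edges and with `|E| ≥ |V|`
    (ep1 ep2 : E → V)
    (hloopfree : ∀ e, ep1 e ≠ ep2 e)
    (hconn : (SimpleGraph.fromRel fun a b => ∃ e, ep1 e = a ∧ ep2 e = b).Connected)
    (hcard : Fintype.card V ≤ Fintype.card E)
    -- the integer polynomial `p` with `θ_G(β, √-1) = (1-β)^{|E|-|V|} p(β)`,
    -- i.e. `ω_G = p`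
    (p : Polynomial ℤ)
    (hp : ∀ β : ℂ, thetaMI ep1 ep2 β =
      (1 - β) ^ (Fintype.card E - Fintype.card V) * Polynomial.aeval β p) :
    p.eval 1 =
      (Nat.card {ψ : V → E // Function.Injective ψ ∧
        ∀ i : V, ep1 (ψ i) = i ∨ ep2 (ψ i) = i} : ℤ) :=
  stmt_16_general ep1 ep2 hloopfree hcard p hp
end
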